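/- arXiv:1408.6774 — 5 statements merged into one kernel-verified Lean document; each statement's English description precedes it below -/
import Mathlib

section
/- Let A ∈ [0,1]^{n×n}, 0 < λ < 1, and let (K,L) be a partition of {1,…,n} into nonempty proper subsets. Then A has a (K,L)-Łukasiewicz eigenvector associated with λ if and only if ρ(A_{KK}) ≤ λ and A^(λ)_{LK} ⊗ (A^(λ)_{KK})* ⊗ 𝟘_K ≤ 𝟘_L, i.e., for every ℓ ∈ L, max_{k,k' ∈ K} (a_{ℓk} − λ + ((A^(λ)_{KK})*)_{kk'}) ≤ 0. -/
open Finset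

/-- Max-plus matrix-vector product: `(A ⊗ x)_i = max_j (a_{ij} + x_j)`. -/
noncomputable def mpMulVec {ι κ : Type*} [Fintype κ] (A : ι → κ → ℝ) (x : κ → ℝ) (i : ι) : ℝ :=
  ⨆ j, (A i j + x j)

/-- Max-plus matrix-matrix product: `(A ⊗ B)_{ik} = max_j (a_{ij} + b_{jk})`. -/
noncomputable def mpMul {ι κ τ : Type*} [Fintype κ] (A : ι → κ → ℝ) (B : κ → τ → ℝ)
    (i : ι) (k : τ) : ℝ :=
  ⨆ j, (A i j + B j k)

/-- `mpPow1 A s` is the `(s+1)`-st max-plus power of `A`, i.e. `A^{⊗(s+1)}`. -/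
noncomputable def mpPow1 {ι : Type*} [Fintype ι] (A : ι → ι → ℝ) : ℕ → ι → ι → ℝ
  | 0 => A
  | (k + 1) => mpMul A (mpPow1 A k)

/-- Weight of the walk `P 0 → P 1 → ⋯ → P len` in the complete weighted digraph `D(B)`. -/
noncomputable def walkWeight {ι : Type*} (B : ι → ι → ℝ) (len : ℕ) (P : Fin (len + 1) → ι) : ℝ :=
  ∑ t : Fin len, B (P t.castSucc) (P t.succ)

/-- The maximum cycle mean `ρ(A)`: the maximum over all cycles (closed walks of length
`1 ≤ k ≤ n`) of the average weight of the cycle. -/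
noncomputable def maxCycleMean {ι : Type*} [Fintype ι] (A : ι → ι → ℝ) : ℝ :=
  sSup { r | ∃ k, 1 ≤ k ∧ k ≤ Fintype.card ι ∧
    ∃ P : Fin (k + 1) → ι, P 0 = P (Fin.last k) ∧ r = walkWeight A k P / (k : ℝ) }

/-- Kleene star of `A` (meaningful when `ρ(A) ≤ 0`):
`A*_{ii} = max(0, max_{1 ≤ k ≤ n-1} (A^{⊗k})_{ii})` and
`A*_{ij} = max_{1 ≤ k ≤ n-1} (A^{⊗k})_{ij}` for `i ≠ j`. -/
noncomputable def kleeneStar {ι : Type*} [Fintype ι] [DecidableEq ι] (A : ι → ι → ℝ)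
    (i j : ι) : ℝ :=
  if i = j then max 0 (⨆ m : Fin (Fintype.card ι - 1), mpPow1 A (m : ℕ) i i)
  else ⨆ m : Fin (Fintype.card ι - 1), mpPow1 A (m : ℕ) i j

/-- Max-Łukasiewicz matrix-vector product: `(A ⊗_L x)_i = max_j max(0, a_{ij} + x_j - 1)`. -/
noncomputable def lukMulVec {ι κ : Type*} [Fintype κ] (A : ι → κ → ℝ) (x : κ → ℝ) (i : ι) : ℝ :=
  ⨆ j, max 0 (A i j + x j - 1)

/-- Max-Łukasiewicz scalar action: `(λ ⊗_L x)_i = max(0, λ + x_i - 1)`. -/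
noncomputable def lukSMul {ι : Type*} (lam : ℝ) (x : ι → ℝ) (i : ι) : ℝ :=
  max 0 (lam + x i - 1)

/-- Max-Łukasiewicz matrix-matrix product: `(A ⊗_L B)_{ik} = max_j max(0, a_{ij} + b_{jk} - 1)`. -/
noncomputable def lukMul {ι κ τ : Type*} [Fintype κ] (A : ι → κ → ℝ) (B : κ → τ → ℝ)
    (i : ι) (k : τ) : ℝ :=
  ⨆ j, max 0 (A i j + B j k - 1)

/-- `lukPow1 A s` is the `(s+1)`-st Łukasiewicz power of `A`, i.e. `A^{⊗_L (s+1)}`. -/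
noncomputable def lukPow1 {ι : Type*} [Fintype ι] (A : ι → ι → ℝ) : ℕ → ι → ι → ℝ
  | 0 => A
  | (t + 1) => lukMul A (lukPow1 A t)

/-- Max-plus matrix-vector product of a real matrix with a vector over `ℝ ∪ {-∞}` (`EReal`). -/
noncomputable def mpMulVecE {ι κ : Type*} [Fintype κ] (A : ι → κ → ℝ) (v : κ → EReal)
    (i : ι) : EReal :=
  ⨆ j, ((A i j : EReal) + v j)

/-- Node `i` of the weighted digraph `D(B)` is secure if every walk starting at `i` has
nonpositive weight. -/
def SecureNode {ι : Type*} (B : ι → ι → ℝ) (i : ι) : Prop :=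
  ∀ (len : ℕ) (P : Fin (len + 1) → ι), P 0 = i → walkWeight B len P ≤ 0

/-- The partition `(K, L)` of `{1,…,n}` is secure with respect to `D(B)` (with parameter `λ`):
if `L = ∅` this means `D(B)` is `λ`-secure (every walk has weight `≤ λ`); otherwise it means
that every walk starting in `L` whose all other nodes lie in `K` has nonpositive weight.
(If `L` is everything, the latter condition holds trivially, matching the convention.) -/
def SecurePartition {n : ℕ} (B : Fin n → Fin n → ℝ) (lam : ℝ) (K L : Finset (Fin n)) : Prop :=
  if L = ∅ then
    ∀ (len : ℕ) (P : Fin (len + 1) → Fin n), walkWeight B len P ≤ lam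
  else
    ∀ (len : ℕ) (P : Fin (len + 1) → Fin n),
      P 0 ∈ L → (∀ t : Fin (len + 1), t ≠ 0 → P t ∈ K) → walkWeight B len P ≤ 0

/-!
If `x` is a `(K,L)`-eigenvector, then on `K` the equation gives `a_ij - λ ≤ x_i - x_j`, so `x` is
a potential for `B = A^(λ)_{KK}`: no cycle of `B` is positive and `B*_{kk'} ≤ x_k - x_k'`; on `L`
it gives `a_lk + x_k ≤ 1`, and the second condition follows.

Conversely, if `ρ(A_{KK}) ≤ λ` then no cycle of `B` is positive, so removing cycles shows that
`B*_{ij}` bounds the weight of every walk from `i` to `j`. Hence `z = B* ⊗ 𝟘_K` is the largest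
weight of a walk starting at each node, so `z = max(0, B ⊗ z)` and `0 ≤ z ≤ λ`. The vector equal
to `1 - λ + z` on `K` and to `0` on `L` is then an eigenvector.
-/

section Walks

variable {ι : Type*} (B : ι → ι → ℝ)

/-- Walks are sequences `P : ℕ → ι` of which only `P 0, …, P len` matter, which makes cutting
and splicing them easy. -/
noncomputable def natWalkWeight (P : ℕ → ι) (len : ℕ) : ℝ :=
  ∑ t ∈ range len, B (P t) (P (t + 1))

@[simp]
theorem natWalkWeight_zero (P : ℕ → ι) : natWalkWeight B P 0 = 0 := rfl

theorem natWalkWeight_add (P : ℕ → ι) (a b : ℕ) :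
    natWalkWeight B P (a + b) = natWalkWeight B P a + natWalkWeight B (fun t => P (a + t)) b := by
  simp only [natWalkWeight, sum_range_add, add_assoc]

theorem natWalkWeight_succ (P : ℕ → ι) (len : ℕ) :
    natWalkWeight B P (len + 1) = natWalkWeight B P len + B (P len) (P (len + 1)) :=
  sum_range_succ _ _

theorem natWalkWeight_succ' (P : ℕ → ι) (len : ℕ) :
    natWalkWeight B P (len + 1) = B (P 0) (P 1) + natWalkWeight B (fun t => P (t + 1)) len := by
  rw [natWalkWeight, sum_range_succ', add_comm]
  rfl

theorem natWalkWeight_congr {P Q : ℕ → ι} {len : ℕ} (h : ∀ t ≤ len, P t = Q t) :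
    natWalkWeight B P len = natWalkWeight B Q len :=
  sum_congr rfl fun t ht => by
    rw [mem_range] at ht
    rw [h t ht.le, h (t + 1) ht]

theorem natWalkWeight_eq_walkWeight (P : ℕ → ι) (len : ℕ) :
    natWalkWeight B P len = walkWeight B len (fun t => P t) := by
  rw [walkWeight, natWalkWeight, ← Fin.sum_univ_eq_sum_range (fun t => B (P t) (P (t + 1)))]
  rfl

theorem walkWeight_sub_const (c : ℝ) (len : ℕ) (P : Fin (len + 1) → ι) :
    walkWeight (fun i j => B i j - c) len P = walkWeight B len P - len * c := by
  simp [walkWeight, sum_sub_distrib]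

theorem natWalkWeight_le_sub {y : ι → ℝ} (hy : ∀ i j, B i j ≤ y i - y j) (P : ℕ → ι)
    (len : ℕ) : natWalkWeight B P len ≤ y (P 0) - y (P len) :=
  calc natWalkWeight B P len ≤ ∑ t ∈ range len, (y (P t) - y (P (t + 1))) :=
        sum_le_sum fun _ _ => hy _ _
    _ = y (P 0) - y (P len) := sum_range_sub' _ _

theorem natWalkWeight_eq_splice (P : ℕ → ι) {len t d : ℕ} (hd : t + d ≤ len)
    (hP : P t = P (t + d)) :
    ∃ R : ℕ → ι, R 0 = P 0 ∧ R (len - d) = P len ∧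
      natWalkWeight B P len =
        natWalkWeight B R (len - d) + natWalkWeight B (fun s => P (t + s)) d := by
  obtain ⟨r, rfl⟩ : ∃ r, len = t + d + r := ⟨len - (t + d), by omega⟩
  refine ⟨fun s => if s ≤ t then P s else P (s + d), by simp, ?_, ?_⟩
  · rcases r with _ | r
    · simp [hP]
    · simp [show ¬ t + d + (r + 1) - d ≤ t by omega,
        show t + d + (r + 1) - d + d = t + d + (r + 1) by omega]
  · rw [show t + d + r - d = t + r by omega, natWalkWeight_add, natWalkWeight_add,
      natWalkWeight_add, natWalkWeight_congr B (fun s hs => (if_pos hs).symm),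
      natWalkWeight_congr B (P := fun s => P (t + d + s)) (fun s _ => ?_)]
    · ring
    · rcases s with _ | s
      · simp [hP]
      · simp [show ¬ t + (s + 1) ≤ t by omega, show t + (s + 1) + d = t + d + (s + 1) by omega]

theorem exists_repeat_of_card_lt [Fintype ι] (P : ℕ → ι) {m : ℕ} (h : Fintype.card ι < m) :
    ∃ t d, 0 < d ∧ t + d < m ∧ P t = P (t + d) := by
  obtain ⟨a, b, hab, hP⟩ :=
    Fintype.exists_ne_map_eq_of_card_lt (fun s : Fin m => P s) (by simpa using h)
  rcases lt_or_gt_of_ne (Fin.val_ne_of_ne hab) with hlt | hlt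
  · exact ⟨a, b - a, by omega, by omega, by rwa [Nat.add_sub_cancel' hlt.le]⟩
  · exact ⟨b, a - b, by omega, by omega, by rw [Nat.add_sub_cancel' hlt.le]; exact hP.symm⟩

theorem natWalkWeight_closed_nonpos [Fintype ι]
    (hB : ∀ len (P : ℕ → ι), 1 ≤ len → len ≤ Fintype.card ι → P 0 = P len →
      natWalkWeight B P len ≤ 0)
    (len : ℕ) (P : ℕ → ι) (hP : P 0 = P len) : natWalkWeight B P len ≤ 0 := by
  induction len using Nat.strong_induction_on generalizing P with
  | _ len ih =>
  rcases Nat.eq_zero_or_pos len with rfl | hpos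
  · simp
  rcases le_or_gt len (Fintype.card ι) with hle | hlt
  · exact hB len P hpos hle hP
  obtain ⟨t, d, hd, htd, hPt⟩ := exists_repeat_of_card_lt P hlt
  obtain ⟨R, hR0, hRlen, hsplit⟩ := natWalkWeight_eq_splice B P htd.le hPt
  have hR := ih (len - d) (by omega) R (by rw [hR0, hRlen, hP])
  have hcycle := ih d (by omega) (fun s => P (t + s)) (by simpa using hPt)
  linarith

variable {B}

/-- A walk closed up by one more edge of weight `≥ -c` is not positive. -/
theorem natWalkWeight_le_of_closed_nonpos
    (hB : ∀ len (P : ℕ → ι), P 0 = P len → natWalkWeight B P len ≤ 0)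
    {c : ℝ} (hc : ∀ i j, -c ≤ B i j) (P : ℕ → ι) (len : ℕ) : natWalkWeight B P len ≤ c := by
  set Q : ℕ → ι := fun t => if t ≤ len then P t else P 0 with hQ
  have hclosed := hB (len + 1) Q (by simp [hQ])
  rw [natWalkWeight_succ, natWalkWeight_congr B (fun t ht => if_pos ht : ∀ t ≤ len, Q t = P t)]
    at hclosed
  have hlast : B (Q len) (Q (len + 1)) = B (P len) (P 0) := by simp [hQ]
  linarith [hc (P len) (P 0)]

end Walks

section MaxCycleMean

variable {ι : Type*} [Fintype ι]

theorem maxCycleMean_le_iff (B : ι → ι → ℝ) {lam : ℝ} (hlam : 0 ≤ lam) :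
    maxCycleMean B ≤ lam ↔ ∀ len (P : ℕ → ι), 1 ≤ len → len ≤ Fintype.card ι → P 0 = P len →
      natWalkWeight (fun i j => B i j - lam) P len ≤ 0 := by
  have hfin : { r | ∃ k, 1 ≤ k ∧ k ≤ Fintype.card ι ∧ ∃ P : Fin (k + 1) → ι,
      P 0 = P (Fin.last k) ∧ r = walkWeight B k P / (k : ℝ) }.Finite :=
    (Set.finite_Iic (Fintype.card ι)).biUnion (fun k _ =>
      Set.finite_range fun P : Fin (k + 1) → ι => walkWeight B k P / (k : ℝ)) |>.subset
      (by rintro r ⟨k, -, hk, P, -, rfl⟩; exact Set.mem_biUnion hk ⟨P, rfl⟩)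
  constructor
  · intro hρ len P hlen hcard hP
    have hmean := (le_csSup hfin.bddAbove ⟨len, hlen, hcard, fun t => P t, hP, rfl⟩).trans hρ
    rw [div_le_iff₀ (by positivity)] at hmean
    rw [natWalkWeight_eq_walkWeight, walkWeight_sub_const]
    linarith
  · refine fun h => Real.sSup_le ?_ hlam
    rintro r ⟨k, hk, hcard, P, hP, rfl⟩
    have hclamp : (fun t : Fin (k + 1) => P (Fin.clamp t k)) = P := by
      funext t
      exact congrArg P (Fin.ext (by simp [Fin.clamp, Nat.le_of_lt_succ t.isLt]))
    have hcycle := h k (fun t => P (Fin.clamp t k)) hk hcard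
      (by simp only [Fin.clamp]; convert hP using 2 <;> ext <;> simp)
    rw [natWalkWeight_eq_walkWeight, hclamp, walkWeight_sub_const] at hcycle
    rw [div_le_iff₀ (by positivity)]
    linarith

theorem maxCycleMean_le_of_sub_le_sub {B : ι → ι → ℝ} {c : ℝ} (hc : 0 ≤ c) {y : ι → ℝ}
    (hy : ∀ i j, B i j - c ≤ y i - y j) : maxCycleMean B ≤ c :=
  (maxCycleMean_le_iff B hc).2 fun len P _ _ hP => by
    simpa [hP] using natWalkWeight_le_sub _ hy P len

end MaxCycleMean

section KleeneStar

variable {ι : Type*} [Fintype ι] (B : ι → ι → ℝ)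

theorem natWalkWeight_le_mpPow1 (m : ℕ) (P : ℕ → ι) :
    natWalkWeight B P (m + 1) ≤ mpPow1 B m (P 0) (P (m + 1)) := by
  induction m generalizing P with
  | zero => simp [natWalkWeight, mpPow1]
  | succ m ih =>
    rw [natWalkWeight_succ']
    calc B (P 0) (P 1) + natWalkWeight B (fun t => P (t + 1)) (m + 1)
        ≤ B (P 0) (P 1) + mpPow1 B m (P 1) (P (m + 2)) := by
          gcongr
          exact ih (fun t => P (t + 1))
      _ ≤ mpPow1 B (m + 1) (P 0) (P (m + 2)) :=
          le_ciSup (Finite.bddAbove_range (fun j => B (P 0) j + mpPow1 B m j (P (m + 2)))) (P 1)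

theorem exists_natWalkWeight_eq_mpPow1 (m : ℕ) (i j : ι) :
    ∃ P : ℕ → ι, P 0 = i ∧ P (m + 1) = j ∧ natWalkWeight B P (m + 1) = mpPow1 B m i j := by
  induction m generalizing i with
  | zero =>
    exact ⟨fun t => if t = 0 then i else j, by simp, by simp, by simp [natWalkWeight, mpPow1]⟩
  | succ m ih =>
    have : Nonempty ι := ⟨i⟩
    obtain ⟨k, hk⟩ := exists_eq_ciSup_of_finite (f := fun k => B i k + mpPow1 B m k j)
    obtain ⟨P, hP0, hPj, hP⟩ := ih k
    refine ⟨fun t => Nat.casesOn t i P, rfl, hPj, ?_⟩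
    rw [natWalkWeight_succ']
    show B i (P 0) + natWalkWeight B P (m + 1) = _
    rw [hP0, hP, hk]
    rfl

theorem kleeneStar_self_nonneg [DecidableEq ι] (i : ι) : 0 ≤ kleeneStar B i i := by
  simp [kleeneStar]

theorem mpPow1_le_kleeneStar [DecidableEq ι] {m : ℕ} (hm : m < Fintype.card ι - 1) (i j : ι) :
    mpPow1 B m i j ≤ kleeneStar B i j := by
  have hle : mpPow1 B m i j ≤ ⨆ m : Fin (Fintype.card ι - 1), mpPow1 B m i j :=
    le_ciSup (Finite.bddAbove_range (fun m : Fin (Fintype.card ι - 1) => mpPow1 B m i j)) ⟨m, hm⟩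
  unfold kleeneStar
  split_ifs with hij
  · subst hij
    exact le_max_of_le_right hle
  · exact hle

/-- The trivial walk accounts for the `0` on the diagonal. -/
theorem exists_natWalkWeight_eq_kleeneStar [DecidableEq ι] (i j : ι) :
    ∃ len, ∃ P : ℕ → ι, P 0 = i ∧ P len = j ∧ natWalkWeight B P len = kleeneStar B i j := by
  have htrivial : ∃ P : ℕ → ι, P 0 = i ∧ P 0 = i ∧ natWalkWeight B P 0 = 0 :=
    ⟨fun _ => i, rfl, rfl, rfl⟩
  rcases isEmpty_or_nonempty (Fin (Fintype.card ι - 1)) with hempty | hne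
  · have hij : i = j := Fintype.card_le_one_iff.1
      (by by_contra h; exact hempty.false ⟨0, by omega⟩) i j
    subst hij
    simpa [kleeneStar] using ⟨0, htrivial⟩
  obtain ⟨m, hm⟩ :=
    exists_eq_ciSup_of_finite (f := fun m : Fin (Fintype.card ι - 1) => mpPow1 B m i j)
  obtain ⟨P, hP0, hPj, hP⟩ := exists_natWalkWeight_eq_mpPow1 B m i j
  unfold kleeneStar
  split_ifs with hij
  · subst hij
    rcases le_total (⨆ m : Fin (Fintype.card ι - 1), mpPow1 B m i i) 0 with hS | hS
    · exact ⟨0, by simpa [max_eq_left hS] using htrivial⟩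
    · exact ⟨m + 1, P, hP0, hPj, by rw [max_eq_right hS, hP, hm]⟩
  · exact ⟨m + 1, P, hP0, hPj, by rw [hP, hm]⟩

theorem kleeneStar_le_sub [DecidableEq ι] {y : ι → ℝ} (hy : ∀ i j, B i j ≤ y i - y j) (i j : ι) :
    kleeneStar B i j ≤ y i - y j := by
  obtain ⟨len, P, rfl, rfl, hP⟩ := exists_natWalkWeight_eq_kleeneStar B i j
  exact hP ▸ natWalkWeight_le_sub B hy P len

theorem natWalkWeight_le_kleeneStar [DecidableEq ι]
    (hB : ∀ len (P : ℕ → ι), P 0 = P len → natWalkWeight B P len ≤ 0) (len : ℕ) (P : ℕ → ι) :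
    natWalkWeight B P len ≤ kleeneStar B (P 0) (P len) := by
  induction len using Nat.strong_induction_on generalizing P with
  | _ len ih =>
  rcases Nat.lt_or_ge len (Fintype.card ι) with hlt | hle
  · rcases len with _ | m
    · simpa using kleeneStar_self_nonneg B (P 0)
    · exact (natWalkWeight_le_mpPow1 B m P).trans (mpPow1_le_kleeneStar B (by omega) _ _)
  obtain ⟨t, d, hd, htd, hPt⟩ := exists_repeat_of_card_lt P (Nat.lt_succ_of_le hle)
  obtain ⟨R, hR0, hRlen, hsplit⟩ := natWalkWeight_eq_splice B P (Nat.le_of_lt_succ htd) hPt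
  have hR := ih (len - d) (by omega) R
  have hcycle := hB d (fun s => P (t + s)) (by simpa using hPt)
  rw [hR0, hRlen] at hR
  linarith

end KleeneStar

section KleeneStarRowSup

variable {ι : Type*} [Fintype ι] [DecidableEq ι] (B : ι → ι → ℝ)

/-- The vector `B* ⊗ 𝟘`. -/
noncomputable def kleeneStarRowSup (k : ι) : ℝ :=
  ⨆ j, kleeneStar B k j

theorem kleeneStarRowSup_nonneg (k : ι) : 0 ≤ kleeneStarRowSup B k :=
  (kleeneStar_self_nonneg B k).trans (le_ciSup (Finite.bddAbove_range _) k)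

theorem exists_natWalkWeight_eq_kleeneStarRowSup (k : ι) :
    ∃ len, ∃ P : ℕ → ι, P 0 = k ∧ natWalkWeight B P len = kleeneStarRowSup B k := by
  have : Nonempty ι := ⟨k⟩
  obtain ⟨j, hj⟩ := exists_eq_ciSup_of_finite (f := fun j => kleeneStar B k j)
  obtain ⟨len, P, hP0, -, hP⟩ := exists_natWalkWeight_eq_kleeneStar B k j
  exact ⟨len, P, hP0, hP.trans hj⟩

variable {B}
variable (hB : ∀ len (P : ℕ → ι), P 0 = P len → natWalkWeight B P len ≤ 0)
include hB

theorem natWalkWeight_le_kleeneStarRowSup (len : ℕ) (P : ℕ → ι) :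
    natWalkWeight B P len ≤ kleeneStarRowSup B (P 0) :=
  (natWalkWeight_le_kleeneStar B hB len P).trans (le_ciSup (Finite.bddAbove_range _) _)

theorem kleeneStarRowSup_le {c : ℝ} (hc : ∀ i j, -c ≤ B i j) (k : ι) :
    kleeneStarRowSup B k ≤ c := by
  obtain ⟨len, P, -, hP⟩ := exists_natWalkWeight_eq_kleeneStarRowSup B k
  exact hP ▸ natWalkWeight_le_of_closed_nonpos hB hc P len

theorem add_kleeneStarRowSup_le (k j : ι) :
    B k j + kleeneStarRowSup B j ≤ kleeneStarRowSup B k := by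
  obtain ⟨len, P, hP0, hP⟩ := exists_natWalkWeight_eq_kleeneStarRowSup B j
  have h := natWalkWeight_le_kleeneStarRowSup hB (len + 1) (fun t => Nat.casesOn t k P)
  rw [natWalkWeight_succ'] at h
  rw [← hP, ← hP0]
  exact h

theorem exists_kleeneStarRowSup_le_max (k : ι) :
    ∃ j, kleeneStarRowSup B k ≤ max 0 (B k j + kleeneStarRowSup B j) := by
  obtain ⟨len, P, rfl, hP⟩ := exists_natWalkWeight_eq_kleeneStarRowSup B k
  rcases len with _ | len
  · exact ⟨P 0, by simp [← hP]⟩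
  · refine ⟨P 1, le_max_of_le_right ?_⟩
    rw [← hP, natWalkWeight_succ']
    gcongr
    exact natWalkWeight_le_kleeneStarRowSup hB len (fun t => P (t + 1))

end KleeneStarRowSup

section Lukasiewicz

variable {ι κ : Type*} [Fintype κ] (A : ι → κ → ℝ) (x : κ → ℝ) (i : ι)

theorem le_lukMulVec (j : κ) : max 0 (A i j + x j - 1) ≤ lukMulVec A x i :=
  le_ciSup (Finite.bddAbove_range (fun j => max 0 (A i j + x j - 1))) j

theorem lukMulVec_eq_of_le_of_exists_le {c : ℝ} (hle : ∀ j, max 0 (A i j + x j - 1) ≤ c)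
    (hex : ∃ j, c ≤ max 0 (A i j + x j - 1)) : lukMulVec A x i = c := by
  obtain ⟨j, hj⟩ := hex
  have : Nonempty κ := ⟨j⟩
  exact le_antisymm (ciSup_le hle) (hj.trans (le_lukMulVec A x i j))

end Lukasiewicz

theorem add_le_max_of_lukMulVec_eq [Fintype ι] {A : ι → ι → ℝ} {x : ι → ℝ} {i : ι} {lam : ℝ}
    (heig : lukMulVec A x i = lukSMul lam x i) (j : ι) : A i j + x j ≤ max 1 (lam + x i) := by
  have h := (le_max_right _ _).trans ((le_lukMulVec A x i j).trans heig.le)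
  rw [lukSMul, le_max_iff] at h
  rw [le_max_iff]
  rcases h with h | h
  · left; linarith
  · right; linarith

def IsLukEigenvector {n : ℕ} (A : Fin n → Fin n → ℝ) (lam : ℝ) (K L : Finset (Fin n))
    (x : Fin n → ℝ) : Prop :=
  (∀ i, x i ∈ Set.Icc (0 : ℝ) 1) ∧ (∀ i, lukMulVec A x i = lukSMul lam x i) ∧
    (∀ i ∈ K, 1 - lam ≤ x i) ∧ (∀ i ∈ L, x i ≤ 1 - lam)

namespace IsLukEigenvector

variable {n : ℕ} {A : Fin n → Fin n → ℝ} {lam : ℝ} {K L : Finset (Fin n)} {x : Fin n → ℝ}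

theorem sub_le_sub (hx : IsLukEigenvector A lam K L x) {i : Fin n} (hi : i ∈ K) (j : Fin n) :
    A i j - lam ≤ x i - x j := by
  have h := add_le_max_of_lukMulVec_eq (hx.2.1 i) j
  rw [max_eq_right (by linarith [hx.2.2.1 i hi])] at h
  linarith

theorem add_le_one (hx : IsLukEigenvector A lam K L x) {l : Fin n} (hl : l ∈ L) (j : Fin n) :
    A l j + x j ≤ 1 := by
  have h := add_le_max_of_lukMulVec_eq (hx.2.1 l) j
  rwa [max_eq_left (by linarith [hx.2.2.2 l hl])] at h

theorem maxCycleMean_le (hx : IsLukEigenvector A lam K L x) (hlam : 0 ≤ lam) :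
    maxCycleMean (fun i j : ↥K => A i.1 j.1) ≤ lam :=
  maxCycleMean_le_of_sub_le_sub hlam fun i j => hx.sub_le_sub i.2 j.1

theorem add_kleeneStar_nonpos (hx : IsLukEigenvector A lam K L x) {l : Fin n} (hl : l ∈ L)
    (k k' : ↥K) : A l k.1 - lam + kleeneStar (fun i j : ↥K => A i.1 j.1 - lam) k k' ≤ 0 := by
  have hstar := kleeneStar_le_sub _ (fun i j : ↥K => hx.sub_le_sub i.2 j.1) k k'
  linarith [hx.add_le_one hl k.1, hx.2.2.1 k'.1 k'.2]

end IsLukEigenvector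

section Extension

variable {n : ℕ} {K : Finset (Fin n)}

noncomputable def lukExtend (lam : ℝ) (K : Finset (Fin n)) (z : ↥K → ℝ) (i : Fin n) : ℝ :=
  if h : i ∈ K then 1 - lam + z ⟨i, h⟩ else 0

theorem lukExtend_of_mem (lam : ℝ) (z : ↥K → ℝ) {i : Fin n} (h : i ∈ K) :
    lukExtend lam K z i = 1 - lam + z ⟨i, h⟩ :=
  dif_pos h

theorem lukExtend_of_notMem (lam : ℝ) (z : ↥K → ℝ) {i : Fin n} (h : i ∉ K) :
    lukExtend lam K z i = 0 :=
  dif_neg h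

variable {A : Fin n → Fin n → ℝ} (hA : ∀ i j, A i j ∈ Set.Icc (0 : ℝ) 1) {lam : ℝ}
  {z : ↥K → ℝ}
include hA

theorem lukMulVec_lukExtend_of_mem (hz0 : ∀ k, 0 ≤ z k)
    (hzle : ∀ k j : ↥K, A k.1 j.1 - lam + z j ≤ z k)
    (hzex : ∀ k : ↥K, ∃ j : ↥K, z k ≤ max 0 (A k.1 j.1 - lam + z j)) {i : Fin n} (hi : i ∈ K) :
    lukMulVec A (lukExtend lam K z) i = lukSMul lam (lukExtend lam K z) i := by
  have hrhs : lukSMul lam (lukExtend lam K z) i = z ⟨i, hi⟩ := by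
    rw [lukSMul, lukExtend_of_mem lam z hi,
      show lam + (1 - lam + z ⟨i, hi⟩) - 1 = z ⟨i, hi⟩ by ring, max_eq_right (hz0 _)]
  rw [hrhs]
  refine lukMulVec_eq_of_le_of_exists_le A _ i (fun j => max_le (hz0 _) ?_) ?_
  · by_cases hj : j ∈ K
    · rw [lukExtend_of_mem lam z hj]
      linarith [hzle ⟨i, hi⟩ ⟨j, hj⟩]
    · rw [lukExtend_of_notMem lam z hj]
      linarith [(hA i j).2, hz0 ⟨i, hi⟩]
  · obtain ⟨j, hj⟩ := hzex ⟨i, hi⟩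
    refine ⟨j.1, ?_⟩
    rwa [lukExtend_of_mem lam z j.2,
      show A i j.1 + (1 - lam + z j) - 1 = A i j.1 - lam + z j by ring]

theorem lukMulVec_lukExtend_of_notMem (hlam : lam ≤ 1) {i : Fin n} (hi : i ∉ K)
    (hzL : ∀ k : ↥K, A i k.1 - lam + z k ≤ 0) :
    lukMulVec A (lukExtend lam K z) i = lukSMul lam (lukExtend lam K z) i := by
  have hrhs : lukSMul lam (lukExtend lam K z) i = 0 := by
    rw [lukSMul, lukExtend_of_notMem lam z hi]
    exact max_eq_left (by linarith)
  rw [hrhs]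
  refine lukMulVec_eq_of_le_of_exists_le A _ i (fun j => max_le le_rfl ?_) ⟨i, le_max_left _ _⟩
  by_cases hj : j ∈ K
  · rw [lukExtend_of_mem lam z hj]
    linarith [hzL ⟨j, hj⟩]
  · rw [lukExtend_of_notMem lam z hj]
    linarith [(hA i j).2]

theorem isLukEigenvector_lukExtend (hz0 : ∀ k, 0 ≤ z k) (hlam : lam ≤ 1) {L : Finset (Fin n)}
    (hdisj : Disjoint K L) (hcover : K ∪ L = Finset.univ) (hzlam : ∀ k, z k ≤ lam)
    (hzle : ∀ k j : ↥K, A k.1 j.1 - lam + z j ≤ z k)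
    (hzex : ∀ k : ↥K, ∃ j : ↥K, z k ≤ max 0 (A k.1 j.1 - lam + z j))
    (hzL : ∀ l ∈ L, ∀ k : ↥K, A l k.1 - lam + z k ≤ 0) :
    IsLukEigenvector A lam K L (lukExtend lam K z) := by
  refine ⟨fun i => ?_, fun i => ?_, fun i hi => ?_, fun i hi => ?_⟩
  · by_cases hi : i ∈ K
    · rw [lukExtend_of_mem lam z hi]
      constructor <;> linarith [hz0 ⟨i, hi⟩, hzlam ⟨i, hi⟩]
    · rw [lukExtend_of_notMem lam z hi]
      constructor <;> linarith
  · by_cases hi : i ∈ K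
    · exact lukMulVec_lukExtend_of_mem hA hz0 hzle hzex hi
    · have hiKL : i ∈ K ∪ L := hcover ▸ Finset.mem_univ i
      exact lukMulVec_lukExtend_of_notMem hA hlam hi
        (hzL i ((Finset.mem_union.1 hiKL).resolve_left hi))
  · rw [lukExtend_of_mem lam z hi]
    linarith [hz0 ⟨i, hi⟩]
  · rw [lukExtend_of_notMem lam z (Finset.disjoint_right.1 hdisj hi)]
    linarith

end Extension

theorem exists_isLukEigenvector {n : ℕ} {A : Fin n → Fin n → ℝ}
    (hA : ∀ i j, A i j ∈ Set.Icc (0 : ℝ) 1) {lam : ℝ} (hlam0 : 0 ≤ lam) (hlam1 : lam ≤ 1)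
    {K L : Finset (Fin n)} (hdisj : Disjoint K L) (hcover : K ∪ L = Finset.univ)
    (hρ : maxCycleMean (fun i j : ↥K => A i.1 j.1) ≤ lam)
    (hL : ∀ l ∈ L, ∀ k k' : ↥K,
      A l k.1 - lam + kleeneStar (fun i j : ↥K => A i.1 j.1 - lam) k k' ≤ 0) :
    ∃ x, IsLukEigenvector A lam K L x := by
  set B : ↥K → ↥K → ℝ := fun i j => A i.1 j.1 - lam
  have hB := natWalkWeight_closed_nonpos B ((maxCycleMean_le_iff _ hlam0).1 hρ)
  have hzL : ∀ l ∈ L, ∀ k, A l k.1 - lam + kleeneStarRowSup B k ≤ 0 := fun l hl k => by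
    have : Nonempty ↥K := ⟨k⟩
    have hsup : kleeneStarRowSup B k ≤ lam - A l k.1 :=
      ciSup_le fun k' => by linarith [hL l hl k k']
    linarith
  exact ⟨_, isLukEigenvector_lukExtend hA (kleeneStarRowSup_nonneg B) hlam1 hdisj hcover
    (kleeneStarRowSup_le hB fun i j => by linarith [(hA i.1 j.1).1])
    (add_kleeneStarRowSup_le hB) (exists_kleeneStarRowSup_le_max hB) hzL⟩

theorem stmt11_general {n : ℕ} (A : Fin n → Fin n → ℝ) (hA : ∀ i j, A i j ∈ Set.Icc (0 : ℝ) 1)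
    (lam : ℝ) (hlam0 : 0 < lam) (hlam1 : lam < 1)
    (K L : Finset (Fin n))
    (hdisj : Disjoint K L) (hcover : K ∪ L = Finset.univ) :
    (∃ x : Fin n → ℝ, (∀ i, x i ∈ Set.Icc (0 : ℝ) 1) ∧
        (∀ i, lukMulVec A x i = lukSMul lam x i) ∧
        (∀ i ∈ K, 1 - lam ≤ x i) ∧ (∀ i ∈ L, x i ≤ 1 - lam)) ↔
      (maxCycleMean (fun i j : ↥K => A i.1 j.1) ≤ lam ∧
        ∀ l ∈ L, ∀ k k' : ↥K,
          A l k.1 - lam + kleeneStar (fun i j : ↥K => A i.1 j.1 - lam) k k' ≤ 0) := by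
  constructor
  · rintro ⟨x, hx : IsLukEigenvector A lam K L x⟩
    exact ⟨hx.maxCycleMean_le hlam0.le, fun l hl => hx.add_kleeneStar_nonpos hl⟩
  · rintro ⟨hρ, hL⟩
    exact exists_isLukEigenvector hA hlam0.le hlam1.le hdisj hcover hρ hL

/-- existence of a `(K,L)` Łukasiewicz eigenvector associated with
`λ ∈ (0,1)` is equivalent to `ρ(A_{KK}) ≤ λ` together with
`A^{(λ)}_{LK} ⊗ (A^{(λ)}_{KK})* ⊗ 𝟘_K ≤ 𝟘_L`. -/
theorem stmt11 {n : ℕ} (A : Fin n → Fin n → ℝ) (hA : ∀ i j, A i j ∈ Set.Icc (0 : ℝ) 1)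
    (lam : ℝ) (hlam0 : 0 < lam) (hlam1 : lam < 1)
    (K L : Finset (Fin n)) (hK : K.Nonempty) (hL : L.Nonempty)
    (hdisj : Disjoint K L) (hcover : K ∪ L = Finset.univ) :
    (∃ x : Fin n → ℝ, (∀ i, x i ∈ Set.Icc (0 : ℝ) 1) ∧
        (∀ i, lukMulVec A x i = lukSMul lam x i) ∧
        (∀ i ∈ K, 1 - lam ≤ x i) ∧ (∀ i ∈ L, x i ≤ 1 - lam)) ↔
      (maxCycleMean (fun i j : ↥K => A i.1 j.1) ≤ lam ∧
        ∀ l ∈ L, ∀ k k' : ↥K,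
          A l k.1 - lam + kleeneStar (fun i j : ↥K => A i.1 j.1 - lam) k k' ≤ 0) :=
  stmt11_general A hA lam hlam0 hlam1 K L hdisj hcover
end

section
/- Let A ∈ [0,1]^{n×n}, 0 < λ < 1, and let (K,L) be a partition of {1,…,n} into nonempty proper subsets. Then A has a (K,L)-Łukasiewicz eigenvector associated with λ if and only if (K,L) is a secure partition with respect to the weighted digraph D(A^(λ)). -/
/-!
Write `B = A^(λ)`. If `x` is a `(K,L)`-eigenvector, the eigen-equation says
`b_ij ≤ p_i - x_j` for the potential `p = max(x, 1 - λ)`, and `x_j = p_j` on `K`; so the weight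
of a walk that starts in `L` and continues in `K` telescopes to at most
`p(start) - p(end) = (1 - λ) - p(end) ≤ 0`.

Conversely, let `z_i` be the supremum of the weights of the walks from `i` that continue in `K`
(the empty walk contributes `0`). Security bounds these weights (by `0` from `L`, and by
`-b_li ≤ λ` from `i ∈ K` after prepending a node `l ∈ L`), so `z` is the least nonnegative
solution of `z_i ≥ b_ij + z_j` for `j ∈ K`, it vanishes on `L`, and `x = 1 - λ + z` on `K`,
`x = 0` on `L`, is an eigenvector.
-/

open Finset

section Walks

variable {ι : Type*} (B : ι → ι → ℝ)

theorem walkWeight_zero (P : Fin 1 → ι) : walkWeight B 0 P = 0 := by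
  simp [walkWeight]

theorem walkWeight_cons (i : ι) {len : ℕ} (P : Fin (len + 1) → ι) :
    walkWeight B (len + 1) (Fin.cons i P : Fin (len + 2) → ι) =
      B i (P 0) + walkWeight B len P := by
  simp [walkWeight, Fin.sum_univ_succ]

theorem walkWeight_le_of_le_sub (p : ι → ℝ) {len : ℕ} (P : Fin (len + 1) → ι)
    (h : ∀ t : Fin len, B (P t.castSucc) (P t.succ) ≤ p (P t.castSucc) - p (P t.succ)) :
    walkWeight B len P ≤ p (P 0) - p (P (Fin.last len)) := by
  induction len with
  | zero => simp [walkWeight]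
  | succ m ih =>
    have hinit := ih (fun t => P t.castSucc) fun t => h t.castSucc
    have hlast := h (Fin.last m)
    simp only [walkWeight, Fin.sum_univ_castSucc, Fin.succ_last, Fin.succ_castSucc] at hinit hlast ⊢
    simp only [Fin.castSucc_zero] at hinit
    linarith

end Walks

section WalkWeightsFrom

variable {ι : Type*} (B : ι → ι → ℝ) (K : Set ι)

def walkWeightsFrom (i : ι) : Set ℝ :=
  {w | ∃ (len : ℕ) (P : Fin (len + 1) → ι),
    P 0 = i ∧ (∀ t, t ≠ 0 → P t ∈ K) ∧ walkWeight B len P = w}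

variable {B K}

theorem zero_mem_walkWeightsFrom (i : ι) : 0 ∈ walkWeightsFrom B K i :=
  ⟨0, fun _ => i, rfl, fun t ht => (ht (Fin.fin_one_eq_zero t)).elim, walkWeight_zero B _⟩

theorem add_mem_walkWeightsFrom (i : ι) {j : ι} (hj : j ∈ K) {w : ℝ}
    (hw : w ∈ walkWeightsFrom B K j) : B i j + w ∈ walkWeightsFrom B K i := by
  obtain ⟨len, P, rfl, hPK, rfl⟩ := hw
  refine ⟨len + 1, Fin.cons i P, rfl, fun t ht => ?_, walkWeight_cons B i P⟩
  obtain ⟨s, rfl⟩ := Fin.exists_succ_eq.mpr ht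
  rw [Fin.cons_succ]
  rcases eq_or_ne s 0 with rfl | hs
  · exact hj
  · exact hPK s hs

theorem eq_zero_or_eq_add_of_mem_walkWeightsFrom {i : ι} {w : ℝ}
    (hw : w ∈ walkWeightsFrom B K i) :
    w = 0 ∨ ∃ j ∈ K, ∃ w' ∈ walkWeightsFrom B K j, w = B i j + w' := by
  obtain ⟨len, P, rfl, hPK, rfl⟩ := hw
  cases len with
  | zero => exact Or.inl (walkWeight_zero B P)
  | succ m =>
    refine Or.inr ⟨P 1, hPK 1 Fin.zero_lt_one.ne', walkWeight B m (Fin.tail P),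
      ⟨m, Fin.tail P, rfl, fun t ht => hPK t.succ (Fin.succ_ne_zero t), rfl⟩, ?_⟩
    conv_lhs => rw [← Fin.cons_self_tail P]
    rw [walkWeight_cons]
    rfl

theorem isLeast_sSup_walkWeightsFrom (hbdd : ∀ j, BddAbove (walkWeightsFrom B K j)) (i : ι) :
    IsLeast {c | 0 ≤ c ∧ ∀ j ∈ K, B i j + sSup (walkWeightsFrom B K j) ≤ c}
      (sSup (walkWeightsFrom B K i)) := by
  refine ⟨⟨le_csSup (hbdd i) (zero_mem_walkWeightsFrom i), fun j hj => ?_⟩,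
    fun c ⟨hc, hstep⟩ => csSup_le ⟨0, zero_mem_walkWeightsFrom i⟩ fun w hw => ?_⟩
  · suffices sSup (walkWeightsFrom B K j) ≤ sSup (walkWeightsFrom B K i) - B i j by linarith
    refine csSup_le ⟨0, zero_mem_walkWeightsFrom j⟩ fun w hw => ?_
    linarith [le_csSup (hbdd i) (add_mem_walkWeightsFrom i hj hw)]
  · obtain rfl | ⟨j, hj, w', hw', rfl⟩ := eq_zero_or_eq_add_of_mem_walkWeightsFrom hw
    · exact hc
    · linarith [le_csSup (hbdd j) hw', hstep j hj]

end WalkWeightsFrom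

theorem securePartition_iff_forall_walkWeightsFrom_nonpos {n : ℕ} {B : Fin n → Fin n → ℝ}
    {lam : ℝ} {K L : Finset (Fin n)} (hL : L.Nonempty) :
    SecurePartition B lam K L ↔ ∀ i ∈ L, ∀ w ∈ walkWeightsFrom B K i, w ≤ 0 := by
  rw [SecurePartition, if_neg hL.ne_empty]
  constructor
  · rintro h i hi w ⟨len, P, rfl, hPK, rfl⟩
    exact h len P hi hPK
  · intro h len P hP0 hPK
    exact h _ hP0 _ ⟨len, P, rfl, hPK, rfl⟩

section Lukasiewicz

variable {ι : Type*} [Fintype ι] {A : ι → ι → ℝ} {lam : ℝ}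

theorem sub_le_of_lukMulVec_eq_lukSMul {x : ι → ℝ} {i : ι}
    (h : lukMulVec A x i = lukSMul lam x i) (j : ι) :
    A i j - lam ≤ max (x i) (1 - lam) - x j := by
  have hj : max 0 (A i j + x j - 1) ≤ lukMulVec A x i :=
    le_ciSup (f := fun k => max 0 (A i k + x k - 1)) (Finite.bddAbove_range _) j
  rw [h, lukSMul] at hj
  have hmax : max 0 (lam + x i - 1) ≤ lam + max (x i) (1 - lam) - 1 :=
    max_le (by linarith [le_max_right (x i) (1 - lam)]) (by linarith [le_max_left (x i) (1 - lam)])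
  linarith [le_max_right 0 (A i j + x j - 1)]

theorem walkWeightsFrom_nonpos_of_lukEigenvector {K L : Finset ι} {x : ι → ℝ}
    (hx : ∀ i, lukMulVec A x i = lukSMul lam x i) (hxK : ∀ i ∈ K, 1 - lam ≤ x i)
    (hxL : ∀ i ∈ L, x i ≤ 1 - lam) {i : ι} (hi : i ∈ L) {w : ℝ}
    (hw : w ∈ walkWeightsFrom (fun i j => A i j - lam) K i) : w ≤ 0 := by
  obtain ⟨len, P, rfl, hPK, rfl⟩ := hw
  set p : ι → ℝ := fun k => max (x k) (1 - lam)
  have hstep : ∀ t : Fin len,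
      A (P t.castSucc) (P t.succ) - lam ≤ p (P t.castSucc) - p (P t.succ) := by
    intro t
    have hpx : p (P t.succ) = x (P t.succ) := max_eq_left (hxK _ (hPK _ (Fin.succ_ne_zero t)))
    rw [hpx]
    exact sub_le_of_lukMulVec_eq_lukSMul (hx _) _
  have hweight := walkWeight_le_of_le_sub (fun i j => A i j - lam) p P hstep
  have hfirst : p (P 0) = 1 - lam := max_eq_right (hxL _ hi)
  have hlast : 1 - lam ≤ p (P (Fin.last len)) := le_max_right _ _
  linarith

variable [DecidableEq ι]

theorem lukMulVec_ite_eq {K : Finset ι} {z : ι → ℝ} {i : ι} (hA : ∀ j, A i j ≤ 1)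
    (hz : IsLeast {c | 0 ≤ c ∧ ∀ j ∈ K, A i j - lam + z j ≤ c} (z i)) :
    lukMulVec A (fun j => if j ∈ K then 1 - lam + z j else 0) i = z i := by
  obtain ⟨⟨hz0, hstep⟩, hleast⟩ := hz
  refine le_antisymm (Real.iSup_le (fun j => ?_) hz0)
    (hleast ⟨Real.iSup_nonneg fun _ => le_max_left _ _, fun j hj => ?_⟩)
  · by_cases hj : j ∈ K
    · simp only [if_pos hj]
      exact max_le hz0 (by linarith [hstep j hj])
    · simp only [if_neg hj]
      exact max_le hz0 (by linarith [hA j])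
  · refine le_trans ?_ (le_ciSup (Finite.bddAbove_range _) j)
    simp only [if_pos hj]
    exact le_of_eq_of_le (by ring) (le_max_right _ _)

theorem exists_lukEigenvector_of_walkWeightsFrom_nonpos (hA : ∀ i j, A i j ∈ Set.Icc (0 : ℝ) 1)
    (hlam0 : 0 ≤ lam) (hlam1 : lam ≤ 1) {K L : Finset ι} (hL : L.Nonempty)
    (hdisj : Disjoint K L) (hcover : K ∪ L = univ)
    (hS : ∀ i ∈ L, ∀ w ∈ walkWeightsFrom (fun i j => A i j - lam) K i, w ≤ 0) :
    ∃ x : ι → ℝ, (∀ i, x i ∈ Set.Icc (0 : ℝ) 1) ∧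
        (∀ i, lukMulVec A x i = lukSMul lam x i) ∧
        (∀ i ∈ K, 1 - lam ≤ x i) ∧ (∀ i ∈ L, x i ≤ 1 - lam) := by
  set W := walkWeightsFrom (fun i j => A i j - lam) K
  obtain ⟨l, hl⟩ := hL
  have hmemL : ∀ i, i ∉ K → i ∈ L := fun i hi =>
    (Finset.mem_union.mp (hcover ▸ Finset.mem_univ i)).resolve_left hi
  have hbound : ∀ i, ∀ w ∈ W i, w ≤ lam := by
    intro i w hw
    by_cases hi : i ∈ K
    · linarith [hS l hl _ (add_mem_walkWeightsFrom l hi hw), (hA l i).1]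
    · linarith [hS i (hmemL i hi) w hw]
  have hbdd : ∀ i, BddAbove (W i) := fun i => ⟨lam, hbound i⟩
  set z : ι → ℝ := fun i => sSup (W i)
  have hz : ∀ i, IsLeast {c | 0 ≤ c ∧ ∀ j ∈ K, A i j - lam + z j ≤ c} (z i) :=
    isLeast_sSup_walkWeightsFrom hbdd
  have hz0 : ∀ i, 0 ≤ z i := fun i => (hz i).1.1
  have hzlam : ∀ i, z i ≤ lam := fun i => csSup_le ⟨0, zero_mem_walkWeightsFrom i⟩ (hbound i)
  have hzL : ∀ i ∈ L, z i = 0 := fun i hi =>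
    le_antisymm (csSup_le ⟨0, zero_mem_walkWeightsFrom i⟩ (hS i hi)) (hz0 i)
  have hluk : ∀ i, lukMulVec A (fun j => if j ∈ K then 1 - lam + z j else 0) i = z i :=
    fun i => lukMulVec_ite_eq (fun j => (hA i j).2) (hz i)
  refine ⟨fun j => if j ∈ K then 1 - lam + z j else 0, fun i => ?_, fun i => ?_,
    fun i hi => ?_, fun i hi => ?_⟩
  · by_cases hi : i ∈ K
    · simp only [if_pos hi]
      constructor <;> linarith [hz0 i, hzlam i]
    · simp only [if_neg hi]
      exact ⟨le_rfl, zero_le_one⟩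
  · rw [hluk, lukSMul]
    by_cases hi : i ∈ K
    · simp only [if_pos hi]
      rw [show lam + (1 - lam + z i) - 1 = z i by ring, max_eq_right (hz0 i)]
    · simp only [if_neg hi]
      rw [hzL i (hmemL i hi), max_eq_left (by linarith)]
  · simp only [if_pos hi]
    linarith [hz0 i]
  · simp only [if_neg (Finset.disjoint_right.mp hdisj hi)]
    linarith

end Lukasiewicz

theorem stmt13_general {n : ℕ} (A : Fin n → Fin n → ℝ) (hA : ∀ i j, A i j ∈ Set.Icc (0 : ℝ) 1)
    (lam : ℝ) (hlam0 : 0 < lam) (hlam1 : lam < 1)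
    (K L : Finset (Fin n)) (hL : L.Nonempty)
    (hdisj : Disjoint K L) (hcover : K ∪ L = Finset.univ) :
    (∃ x : Fin n → ℝ, (∀ i, x i ∈ Set.Icc (0 : ℝ) 1) ∧
        (∀ i, lukMulVec A x i = lukSMul lam x i) ∧
        (∀ i ∈ K, 1 - lam ≤ x i) ∧ (∀ i ∈ L, x i ≤ 1 - lam)) ↔
      SecurePartition (fun i j => A i j - lam) lam K L := by
  rw [securePartition_iff_forall_walkWeightsFrom_nonpos hL]
  constructor
  · rintro ⟨x, -, hx, hxK, hxL⟩ i hi w hw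
    exact walkWeightsFrom_nonpos_of_lukEigenvector hx hxK hxL hi hw
  · exact exists_lukEigenvector_of_walkWeightsFrom_nonpos hA hlam0.le hlam1.le hL hdisj hcover

/-- a `(K,L)` Łukasiewicz eigenvector associated with `λ ∈ (0,1)` exists iff
`(K,L)` is a secure partition with respect to `D(A^{(λ)})`. -/
theorem stmt13 {n : ℕ} (A : Fin n → Fin n → ℝ) (hA : ∀ i j, A i j ∈ Set.Icc (0 : ℝ) 1)
    (lam : ℝ) (hlam0 : 0 < lam) (hlam1 : lam < 1)
    (K L : Finset (Fin n)) (hK : K.Nonempty) (hL : L.Nonempty)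
    (hdisj : Disjoint K L) (hcover : K ∪ L = Finset.univ) :
    (∃ x : Fin n → ℝ, (∀ i, x i ∈ Set.Icc (0 : ℝ) 1) ∧
        (∀ i, lukMulVec A x i = lukSMul lam x i) ∧
        (∀ i ∈ K, 1 - lam ≤ x i) ∧ (∀ i ∈ L, x i ≤ 1 - lam)) ↔
      SecurePartition (fun i j => A i j - lam) lam K L :=
  stmt13_general A hA lam hlam0 hlam1 K L hL hdisj hcover
end

section
/- Let A ∈ [0,1]^{n×n}, 0 < λ < 1, and let (K_1,L_1) and (K_2,L_2) be two secure partitions of {1,…,n} with respect to D(A^(λ)) such that L_1 ⊆ L_2 and L_1 ≠ L_2. Then there exists a node k ∈ L_2 ∖ L_1 (equivalently k ∈ K_1 ∖ K_2) which is a secure node of the weighted digraph D(A^(λ)_{K_1 K_1}). -/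
open Finset

/-!
A positive walk inside `K₁` from a node of `D = L₂ ∖ L₁` can be cut at its last visit to `D`:
the tail starts in `L₂` and otherwise stays in `K₂`, so it is nonpositive by security of
`(K₂, L₂)`, and the head is a positive walk inside `K₁` between two nodes of `D`. If no node
of `D` were secure in `D(A^(λ)_{K₁K₁})`, chaining such walks through the finite set `D` would
close up into a positive cycle inside `K₁`. Going around it often enough, entered from a node
of `L₁` (or on its own if `L₁ = ∅`), violates security of `(K₁, L₁)`.
-/

/-- Walks are encoded as sequences `ℕ → ι` of which only the first `len + 1` terms count;
unlike `Fin (len + 1) → ι`, this makes splicing walks free of casts. -/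
noncomputable def seqWeight {ι : Type*} (B : ι → ι → ℝ) (Q : ℕ → ι) (len : ℕ) : ℝ :=
  ∑ i ∈ range len, B (Q i) (Q (i + 1))

section seqWeight

variable {ι : Type*} (B : ι → ι → ℝ)

lemma seqWeight_congr {Q R : ℕ → ι} {len : ℕ} (h : ∀ i ≤ len, Q i = R i) :
    seqWeight B Q len = seqWeight B R len :=
  sum_congr rfl fun i hi => by
    rw [mem_range] at hi
    rw [h i hi.le, h (i + 1) hi]

lemma seqWeight_add (Q : ℕ → ι) (a b : ℕ) :
    seqWeight B Q (a + b) = seqWeight B Q a + seqWeight B (fun i => Q (a + i)) b := by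
  simp only [seqWeight, sum_range_add, add_assoc]

lemma seqWeight_succ' (Q : ℕ → ι) (len : ℕ) :
    seqWeight B Q (len + 1) = B (Q 0) (Q 1) + seqWeight B (fun i => Q (i + 1)) len := by
  rw [seqWeight, sum_range_succ', add_comm]
  rfl

lemma seqWeight_append {Q R : ℕ → ι} {a : ℕ} (h : Q a = R 0) (b : ℕ) :
    seqWeight B (fun i => if i ≤ a then Q i else R (i - a)) (a + b) =
      seqWeight B Q a + seqWeight B R b := by
  rw [seqWeight_add]
  congr 1
  · exact seqWeight_congr B fun i hi => if_pos hi
  · refine seqWeight_congr B fun i _ => ?_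
    rcases Nat.eq_zero_or_pos i with rfl | hi
    · simp [h]
    · simp [show ¬a + i ≤ a by omega]

lemma seqWeight_mod_mul {Q : ℕ → ι} {len : ℕ} (h : Q len = Q 0) (N : ℕ) :
    seqWeight B (fun i => Q (i % len)) (N * len) = N * seqWeight B Q len := by
  induction N with
  | zero => simp [seqWeight]
  | succ N ih =>
    rw [add_one_mul, seqWeight_add, ih, Nat.cast_succ, add_one_mul]
    congr 1
    refine seqWeight_congr B fun i hi => ?_
    rw [Nat.mul_add_mod_self_right]
    rcases hi.lt_or_eq with hi | rfl
    · rw [Nat.mod_eq_of_lt hi]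
    · rw [Nat.mod_self, h]

lemma walkWeight_eq_seqWeight (Q : ℕ → ι) (len : ℕ) :
    walkWeight B len (fun t => Q t) = seqWeight B Q len := by
  rw [walkWeight, seqWeight, ← Fin.sum_univ_eq_sum_range]
  simp

lemma walkWeight_eq_seqWeight_clamp {len : ℕ} (P : Fin (len + 1) → ι) :
    walkWeight B len P = seqWeight B (fun i => P (Fin.clamp i len)) len := by
  rw [← walkWeight_eq_seqWeight]
  congr
  funext t
  congr
  ext
  simp [Nat.lt_succ_iff.mp t.2]

lemma exists_seqWeight_pos_of_not_secureNode {K : Finset ι} {k : ι} {hk : k ∈ K}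
    (h : ¬SecureNode (fun i j : ↥K => B i j) ⟨k, hk⟩) :
    ∃ (len : ℕ) (Q : ℕ → ι), Q 0 = k ∧ (∀ i, Q i ∈ K) ∧ 0 < seqWeight B Q len := by
  simp only [SecureNode, not_forall, not_le] at h
  obtain ⟨len, P, hP0, hpos⟩ := h
  rw [walkWeight_eq_seqWeight_clamp] at hpos
  refine ⟨len, fun i => P (Fin.clamp i len), ?_, fun i => (P _).2, hpos⟩
  have : Fin.clamp 0 len = 0 := Fin.ext (by simp)
  simp [this, hP0]

end seqWeight

section PosWalk

variable {ι : Type*} (B : ι → ι → ℝ) (S : Set ι)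

def PosWalk (x y : ι) : Prop :=
  ∃ (len : ℕ) (Q : ℕ → ι), Q 0 = x ∧ Q len = y ∧ (∀ i, Q i ∈ S) ∧ 0 < seqWeight B Q len

instance : IsTrans ι (PosWalk B S) where
  trans _ _ _ := by
    rintro ⟨a, Q, hQ0, hQa, hQS, hQpos⟩ ⟨b, R, hR0, hRb, hRS, hRpos⟩
    refine ⟨a + b, fun i => if i ≤ a then Q i else R (i - a), by simpa using hQ0, ?_,
      fun i => by by_cases h : i ≤ a <;> simp [h, hQS, hRS], ?_⟩
    · rcases Nat.eq_zero_or_pos b with rfl | hb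
      · simp_all
      · simp [show ¬a + b ≤ a by omega, hRb]
    rw [seqWeight_append B (hQa.trans hR0.symm)]
    positivity

variable {B S}

lemma exists_posWalk_mem_of_seqWeight_pos {D : Set ι}
    (hD : ∀ (Q : ℕ → ι) (len : ℕ), (∀ i, Q i ∈ S) → Q 0 ∈ D →
      (∀ i, 1 ≤ i → i ≤ len → Q i ∉ D) → seqWeight B Q len ≤ 0)
    {Q : ℕ → ι} {len : ℕ} (hS : ∀ i, Q i ∈ S) (h0 : Q 0 ∈ D) (hpos : 0 < seqWeight B Q len) :
    ∃ y ∈ D, PosWalk B S (Q 0) y := by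
  classical
  set t := Nat.findGreatest (fun t => Q t ∈ D) len
  have ht : t ≤ len := Nat.findGreatest_le len
  have htD : Q t ∈ D := Nat.findGreatest_spec (P := fun t => Q t ∈ D) (Nat.zero_le _) h0
  have hlast : ∀ i, t < i → i ≤ len → Q i ∉ D := fun _ => Nat.findGreatest_is_greatest
  have htail : seqWeight B (fun i => Q (t + i)) (len - t) ≤ 0 :=
    hD _ _ (fun i => hS _) htD fun i hi hle => hlast (t + i) (by omega) (by omega)
  refine ⟨Q t, htD, t, Q, rfl, rfl, hS, ?_⟩
  have := seqWeight_add B Q t (len - t)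
  rw [Nat.add_sub_cancel' ht] at this
  linarith

end PosWalk

lemma Finite.exists_rel_self_of_forall_exists {α : Type*} [Finite α] (r : α → α → Prop)
    [IsTrans α r] {s : Set α} (hs : s.Nonempty) (h : ∀ x ∈ s, ∃ y ∈ s, r x y) :
    ∃ x, r x x := by
  by_contra! hirr
  have : Std.Irrefl (flip r) := ⟨hirr⟩
  have : IsTrans α (flip r) := ⟨fun _ _ _ hab hbc => IsTrans.trans (r := r) _ _ _ hbc hab⟩
  obtain ⟨m, hm, hmin⟩ := (Finite.wellFounded_of_trans_of_irrefl (flip r)).has_min s hs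
  obtain ⟨y, hy, hmy⟩ := h m hm
  exact hmin y hy hmy

lemma nonpos_of_forall_add_nat_mul_le {c d w : ℝ} (h : ∀ N : ℕ, c + N * w ≤ d) : w ≤ 0 := by
  by_contra! hw
  obtain ⟨N, hN⟩ := exists_nat_gt ((d - c) / w)
  rw [div_lt_iff₀ hw] at hN
  linarith [h N]

namespace SecurePartition

variable {n : ℕ} {B : Fin n → Fin n → ℝ} {lam : ℝ} {K L : Finset (Fin n)}

lemma seqWeight_le_of_empty (hs : SecurePartition B lam K ∅) (Q : ℕ → Fin n) (len : ℕ) :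
    seqWeight B Q len ≤ lam := by
  rw [SecurePartition, if_pos rfl] at hs
  simpa only [walkWeight_eq_seqWeight] using hs len fun t => Q t

lemma seqWeight_nonpos (hs : SecurePartition B lam K L) {Q : ℕ → Fin n} {len : ℕ}
    (h0 : Q 0 ∈ L) (hK : ∀ i, 1 ≤ i → i ≤ len → Q i ∈ K) : seqWeight B Q len ≤ 0 := by
  rw [SecurePartition, if_neg (ne_empty_of_mem h0)] at hs
  rw [← walkWeight_eq_seqWeight]
  exact hs len _ h0 fun t ht => hK t (Nat.one_le_iff_ne_zero.mpr (Fin.val_ne_zero_iff.mpr ht))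
    (Nat.lt_succ_iff.mp t.2)

lemma seqWeight_nonpos_of_closed (hs : SecurePartition B lam K L) {Q : ℕ → Fin n}
    (hQ : ∀ i, Q i ∈ K) {len : ℕ} (hc : Q len = Q 0) : seqWeight B Q len ≤ 0 := by
  have hiter := seqWeight_mod_mul B hc
  rcases L.eq_empty_or_nonempty with rfl | ⟨l, hl⟩
  · refine nonpos_of_forall_add_nat_mul_le (c := 0) (d := lam) fun N => ?_
    simpa [hiter] using hs.seqWeight_le_of_empty (fun i => Q (i % len)) (N * len)
  · refine nonpos_of_forall_add_nat_mul_le (c := B l (Q 0)) (d := 0) fun N => ?_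
    have := hs.seqWeight_nonpos (Q := fun i => if i = 0 then l else Q ((i - 1) % len))
      (len := N * len + 1) (by simp [hl]) fun i hi _ => by simp [show i ≠ 0 by omega, hQ]
    simpa [seqWeight_succ', hiter] using this

end SecurePartition

theorem stmt14_general {n : ℕ} (A : Fin n → Fin n → ℝ) (lam : ℝ) (K1 L1 K2 L2 : Finset (Fin n))
    (h1d : Disjoint K1 L1) (h1c : K1 ∪ L1 = Finset.univ)
    (h2c : K2 ∪ L2 = Finset.univ)
    (hs1 : SecurePartition (fun i j => A i j - lam) lam K1 L1)
    (hs2 : SecurePartition (fun i j => A i j - lam) lam K2 L2)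
    (hsub : L1 ⊆ L2) (hne : L1 ≠ L2) :
    ∃ (k : Fin n) (_ : k ∈ L2 \ L1) (hkK : k ∈ K1),
      SecureNode (fun i j : ↥K1 => A i.1 j.1 - lam) (⟨k, hkK⟩ : ↥K1) := by
  by_contra! hinsecure
  set B : Fin n → Fin n → ℝ := fun i j => A i j - lam
  have hK1 : ∀ k ∈ L2 \ L1, k ∈ K1 := fun k hk =>
    (mem_union.mp (h1c ▸ mem_univ k)).resolve_right (mem_sdiff.mp hk).2
  have hK2 : ∀ i ∈ K1, i ∉ L2 \ L1 → i ∈ K2 := fun i hi hiD =>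
    (mem_union.mp (h2c ▸ mem_univ i)).resolve_right fun hiL2 =>
      disjoint_left.mp h1d hi (by_contra fun hiL1 => hiD (mem_sdiff.mpr ⟨hiL2, hiL1⟩))
  set D : Set (Fin n) := ↑(L2 \ L1)
  have hstep : ∀ k ∈ D, ∃ y ∈ D, PosWalk B ↑K1 k y := by
    intro k hk
    obtain ⟨len, Q, rfl, hQ, hpos⟩ :=
      exists_seqWeight_pos_of_not_secureNode B (hinsecure k hk (hK1 k hk))
    refine exists_posWalk_mem_of_seqWeight_pos (fun R len hR h0 hout => ?_) hQ hk hpos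
    exact hs2.seqWeight_nonpos (mem_sdiff.mp h0).1 fun i h1 h2 => hK2 _ (hR i) (hout i h1 h2)
  have hD : D.Nonempty :=
    coe_nonempty.mpr (sdiff_nonempty.mpr fun h => hne (hsub.antisymm h))
  obtain ⟨k, len, Q, hQ0, hQk, hQ, hpos⟩ := Finite.exists_rel_self_of_forall_exists _ hD hstep
  exact (hs1.seqWeight_nonpos_of_closed hQ (hQk.trans hQ0.symm)).not_gt hpos

/-- if `(K₁,L₁)` and `(K₂,L₂)` are secure partitions w.r.t. `D(A^{(λ)})` with
`L₁ ⊊ L₂`, then some node `k ∈ L₂ ∖ L₁ = K₁ ∖ K₂` is a secure node of `D(A^{(λ)}_{K₁K₁})`. -/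
theorem stmt14 {n : ℕ} (A : Fin n → Fin n → ℝ) (hA : ∀ i j, A i j ∈ Set.Icc (0 : ℝ) 1)
    (lam : ℝ) (hlam0 : 0 < lam) (hlam1 : lam < 1)
    (K1 L1 K2 L2 : Finset (Fin n))
    (h1d : Disjoint K1 L1) (h1c : K1 ∪ L1 = Finset.univ)
    (h2d : Disjoint K2 L2) (h2c : K2 ∪ L2 = Finset.univ)
    (hs1 : SecurePartition (fun i j => A i j - lam) lam K1 L1)
    (hs2 : SecurePartition (fun i j => A i j - lam) lam K2 L2)
    (hsub : L1 ⊆ L2) (hne : L1 ≠ L2) :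
    ∃ (k : Fin n) (_ : k ∈ L2 \ L1) (hkK : k ∈ K1),
      SecureNode (fun i j : ↥K1 => A i.1 j.1 - lam) (⟨k, hkK⟩ : ↥K1) :=
  stmt14_general A lam K1 L1 K2 L2 h1d h1c h2c hs1 hs2 hsub hne
end

section
/- Let A ∈ [0,1]^{n×n}, x ∈ [0,1]^n and t ≥ 1. Then A^{⊗_L t} ⊗_L x = ((A^(1))^{⊗t} ⊗ x) ⊕ 𝟘, i.e., for every i, (A^{⊗_L t} ⊗_L x)_i = max(0, max_j (((A^(1))^{⊗t})_{ij} + x_j)), where A^{⊗_L t} is the t-th Łukasiewicz matrix power and (A^(1))^{⊗t} is the t-th max-plus matrix power of the matrix with entries a_{ij} − 1. -/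
open Finset

open Finset

/-!
Write `B = A^(1)` for the matrix with entries `a_{ij} - 1`. Truncation at `0` commutes with
finite maxima, and for `a ≤ 1` it may be pulled inside a Łukasiewicz sum:
`max 0 (a + max 0 b - 1) = max 0 (a + b - 1)`. Hence the Łukasiewicz powers are the truncated,
shifted max-plus powers, `A^{⊗_L t} = max 0 (B^{⊗t} + 1)`, and one more Łukasiewicz product
with `x ≤ 1` gives `max 0 (B^{⊗t} ⊗ x)`.
-/

lemma max_zero_add_max_zero_sub_one {a b : ℝ} (ha : a ≤ 1) :
    max 0 (a + max 0 b - 1) = max 0 (a + b - 1) := by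
  rcases le_total b 0 with hb | hb
  · rw [max_eq_left hb, max_eq_left (by linarith), max_eq_left (by linarith)]
  · rw [max_eq_right hb]

lemma max_zero_ciSup_add {κ : Type*} [Finite κ] [Nonempty κ] (g : κ → ℝ) (c : ℝ) :
    max 0 ((⨆ j, g j) + c) = ⨆ j, max 0 (g j + c) :=
  Monotone.map_ciSup_of_continuousAt (f := fun y => max 0 (y + c)) (by fun_prop)
    (fun _ _ h => by dsimp only; gcongr) (Finite.bddAbove_range g)

section Products

variable {ι κ : Type*} [Fintype κ] [Nonempty κ]

lemma lukMul_max_zero_add_one {τ : Type*} (A : ι → κ → ℝ) (hA : ∀ i j, A i j ≤ 1)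
    (N : κ → τ → ℝ) (i : ι) (k : τ) :
    lukMul A (fun j k => max 0 (N j k + 1)) i k =
      max 0 (mpMul (fun i j => A i j - 1) N i k + 1) := by
  rw [mpMul, max_zero_ciSup_add]
  refine iSup_congr fun j => ?_
  rw [max_zero_add_max_zero_sub_one (hA i j)]
  congr 1
  ring

lemma lukMulVec_max_zero_add_one (N : ι → κ → ℝ) (x : κ → ℝ) (hx : ∀ j, x j ≤ 1) (i : ι) :
    lukMulVec (fun i j => max 0 (N i j + 1)) x i = max 0 (mpMulVec N x i) := by
  rw [mpMulVec, ← add_zero (⨆ j, N i j + x j), max_zero_ciSup_add]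
  refine iSup_congr fun j => ?_
  rw [add_comm _ (x j), max_zero_add_max_zero_sub_one (hx j)]
  congr 1
  ring

end Products

lemma lukPow1_eq_max_zero_mpPow1_add_one {ι : Type*} [Fintype ι] [Nonempty ι]
    (A : ι → ι → ℝ) (hA : ∀ i j, A i j ∈ Set.Icc (0 : ℝ) 1) (s : ℕ) :
    lukPow1 A s = fun i k => max 0 (mpPow1 (fun i j => A i j - 1) s i k + 1) := by
  induction s with
  | zero =>
    funext i k
    simp [mpPow1, lukPow1, (hA i k).1]
  | succ s ih =>
    funext i k
    rw [lukPow1, ih, lukMul_max_zero_add_one A (fun i j => (hA i j).2)]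
    rfl

theorem stmt17_general {n : ℕ} (A : Fin n → Fin n → ℝ) (hA : ∀ i j, A i j ∈ Set.Icc (0 : ℝ) 1)
    (x : Fin n → ℝ) (hx : ∀ j, x j ∈ Set.Icc (0 : ℝ) 1) (t : ℕ) :
    ∀ i, lukMulVec (lukPow1 A (t - 1)) x i =
      max 0 (mpMulVec (mpPow1 (fun i j => A i j - 1) (t - 1)) x i) := by
  intro i
  have : Nonempty (Fin n) := ⟨i⟩
  rw [lukPow1_eq_max_zero_mpPow1_add_one A hA]
  exact lukMulVec_max_zero_add_one _ x (fun j => (hx j).2) i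

/-- for `t ≥ 1`, `A^{⊗_L t} ⊗_L x = ((A^{(1)})^{⊗ t} ⊗ x) ⊕ 𝟘` componentwise.
(Here `lukPow1 A (t-1) = A^{⊗_L t}` and `mpPow1 B (t-1) = B^{⊗ t}`.) -/
theorem stmt17 {n : ℕ} (A : Fin n → Fin n → ℝ) (hA : ∀ i j, A i j ∈ Set.Icc (0 : ℝ) 1)
    (x : Fin n → ℝ) (hx : ∀ j, x j ∈ Set.Icc (0 : ℝ) 1) (t : ℕ) (ht : 1 ≤ t) :
    ∀ i, lukMulVec (lukPow1 A (t - 1)) x i =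
      max 0 (mpMulVec (mpPow1 (fun i j => A i j - 1) (t - 1)) x i) :=
  stmt17_general A hA x hx t
end

section
/- Let A ∈ [0,1]^{n×n} and t ≥ 2. Then A^{⊗_L t} = ((A^(1))^{⊗(t−1)} ⊗ A) ⊕ O, i.e., for all i,k, (A^{⊗_L t})_{ik} = max(0, max_j (((A^(1))^{⊗(t−1)})_{ij} + a_{jk})), where O is the n×n zero matrix. -/
open Finset

/-
With `B = A^(1)`, one Łukasiewicz step is `A ⊗_L X = max(0, B ⊗ X)` as soon as `X`
is itself of the form `max(0, Y)`: since `b_ij ≤ 0`, the inner truncation at `0` is absorbed by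
the outer one, `max(0, b + max(0, y)) = max(0, b + y)`. As `A = max(0, A)`, induction on `t` and
associativity of the max-plus product give `A^{⊗_L t} = max(0, B ⊗ (B^{⊗(t-2)} ⊗ A))
= max(0, B^{⊗(t-1)} ⊗ A)`.
-/

lemma max_zero_add_max_zero_of_nonpos {c : ℝ} (hc : c ≤ 0) (y : ℝ) :
    max 0 (c + max 0 y) = max 0 (c + y) := by
  rcases le_total y 0 with hy | hy
  · simp [max_eq_left hy, max_eq_left hc, max_eq_left (add_nonpos hc hy)]
  · rw [max_eq_right hy]

lemma max_zero_ciSup {ι : Type*} [Finite ι] [Nonempty ι] (f : ι → ℝ) :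
    max 0 (⨆ i, f i) = ⨆ i, max 0 (f i) :=
  (monotone_const.max monotone_id).map_ciSup_of_continuousAt
    (continuous_const.max continuous_id).continuousAt (Finite.bddAbove_range f)

section MaxPlus

variable {ι κ μ τ : Type*}

lemma le_mpMul [Fintype κ] (A : ι → κ → ℝ) (B : κ → τ → ℝ) (i : ι) (j : κ) (k : τ) :
    A i j + B j k ≤ mpMul A B i k :=
  le_ciSup (f := fun j => A i j + B j k) (Finite.bddAbove_range _) j

lemma mpMul_le [Fintype κ] [Nonempty κ] {A : ι → κ → ℝ} {B : κ → τ → ℝ} {i : ι} {k : τ} {c : ℝ}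
    (h : ∀ j, A i j + B j k ≤ c) : mpMul A B i k ≤ c :=
  ciSup_le h

lemma mpMul_assoc [Fintype κ] [Nonempty κ] [Fintype μ] [Nonempty μ] (A : ι → κ → ℝ)
    (B : κ → μ → ℝ) (C : μ → τ → ℝ) : mpMul (mpMul A B) C = mpMul A (mpMul B C) := by
  ext i k
  apply le_antisymm
  · refine mpMul_le fun l => ?_
    suffices mpMul A B i l ≤ mpMul A (mpMul B C) i k - C l k by linarith
    refine mpMul_le fun j => ?_
    linarith [le_mpMul B C j l k, le_mpMul A (mpMul B C) i j k]
  · refine mpMul_le fun j => ?_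
    suffices mpMul B C j k ≤ mpMul (mpMul A B) C i k - A i j by linarith
    refine mpMul_le fun l => ?_
    linarith [le_mpMul A B i j l, le_mpMul (mpMul A B) C i l k]

end MaxPlus

lemma lukMul_max_zero {ι κ τ : Type*} [Fintype κ] [Nonempty κ] {A : ι → κ → ℝ}
    (hA : ∀ i j, A i j ≤ 1) (Y : κ → τ → ℝ) :
    lukMul A (fun j k => max 0 (Y j k)) =
      fun i k => max 0 (mpMul (fun i j => A i j - 1) Y i k) := by
  ext i k
  rw [mpMul, max_zero_ciSup]
  refine iSup_congr fun j => ?_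
  rw [← max_zero_add_max_zero_of_nonpos (sub_nonpos.2 (hA i j))]
  ring_nf

theorem lukPow1_succ_eq_max_zero_mpMul {ι : Type*} [Fintype ι] [Nonempty ι] {A : ι → ι → ℝ}
    (hA : ∀ i j, A i j ∈ Set.Icc (0 : ℝ) 1) (s : ℕ) :
    lukPow1 A (s + 1) = fun i k => max 0 (mpMul (mpPow1 (fun i j => A i j - 1) s) A i k) := by
  have hA1 : ∀ i j, A i j ≤ 1 := fun i j => (hA i j).2
  induction s with
  | zero =>
    have hA_eq : A = fun j k => max 0 (A j k) := by
      ext j k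
      exact (max_eq_right (hA j k).1).symm
    have h := lukMul_max_zero hA1 A
    rw [← hA_eq] at h
    exact h
  | succ s ih =>
    change lukMul A (lukPow1 A (s + 1)) = _
    rw [ih, lukMul_max_zero hA1, ← mpMul_assoc]
    rfl

/-- for `t ≥ 2`, `A^{⊗_L t} = ((A^{(1)})^{⊗(t-1)} ⊗ A) ⊕ O` entrywise.
(Here `lukPow1 A (t-1) = A^{⊗_L t}` and `mpPow1 B (t-2) = B^{⊗(t-1)}`.) -/
theorem stmt18 {n : ℕ} (A : Fin n → Fin n → ℝ) (hA : ∀ i j, A i j ∈ Set.Icc (0 : ℝ) 1)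
    (t : ℕ) (ht : 2 ≤ t) :
    ∀ i k, lukPow1 A (t - 1) i k =
      max 0 (mpMul (mpPow1 (fun i j => A i j - 1) (t - 2)) A i k) := by
  intro i k
  have : Nonempty (Fin n) := ⟨i⟩
  obtain ⟨s, rfl⟩ : ∃ s, t = s + 2 := ⟨t - 2, by omega⟩
  rw [show s + 2 - 1 = s + 1 by omega, show s + 2 - 2 = s by omega,
    lukPow1_succ_eq_max_zero_mpMul hA]
end
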